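/- arXiv:1603.03520 — 6 statements merged into one kernel-verified Lean document; each statement's English description precedes it below -/
import Mathlib

section
/- Let n̄ be an odd positive integer and q a positive integer with gcd(q, n̄) = 1. For a ∈ ℤ/n̄ℤ with a ≠ -a, the q-cyclotomic coset of a modulo n̄ equals the q-cyclotomic coset of -a modulo n̄ for all such a if and only if there exists a positive integer k with q^k ≡ -1 (mod n̄). -/
/-- The `q`-cyclotomic coset of `a` modulo `n`, as a subset of `ZMod n`. -/
def cyclotomicCoset (n q : ℕ) (a : ZMod n) : Set (ZMod n) :=
  {x | ∃ i : ℕ, x = a * (q : ZMod n) ^ i}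

/-- For odd `n̄` coprime to `q`, the `q`-cyclotomic coset of `a` equals that of `-a`
for every `a ≠ -a` iff `q^k ≡ -1 (mod n̄)` for some positive `k`. -/
theorem stmt_0 (n q : ℕ) (hn : Odd n) (hn0 : 0 < n) (hq : 0 < q)
    (hcop : Nat.Coprime q n) :
    (∀ a : ZMod n, a ≠ -a → cyclotomicCoset n q a = cyclotomicCoset n q (-a)) ↔
      ∃ k : ℕ, 0 < k ∧ (q : ZMod n) ^ k = -1 := by
  constructor
  · intro h
    rcases Nat.lt_or_ge n 2 with h2 | h2
    · have hn1 : n = 1 := by omega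
      subst hn1
      exact ⟨1, one_pos, Subsingleton.elim _ _⟩
    · have hne : (1 : ZMod n) ≠ -1 := by
        intro hh
        have h20 : ((2 : ℕ) : ZMod n) = 0 := by push_cast; linear_combination hh
        have hdvd : n ∣ 2 := (ZMod.natCast_eq_zero_iff 2 n).mp h20
        have : n ≤ 2 := Nat.le_of_dvd (by norm_num) hdvd
        have : n = 2 := by omega
        rw [this] at hn
        exact (Nat.not_odd_iff_even.mpr (by norm_num)) hn
      have heq := h 1 hne
      have hmem : (-1 : ZMod n) ∈ cyclotomicCoset n q (-1) := ⟨0, by simp⟩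
      rw [← heq] at hmem
      obtain ⟨i, hi⟩ := hmem
      have hi0 : i ≠ 0 := by
        intro h0
        subst h0
        simp at hi
        exact hne hi.symm
      exact ⟨i, Nat.pos_of_ne_zero hi0, by rw [hi]; ring⟩
  · rintro ⟨k, hk, hqk⟩ a _
    ext x
    simp only [cyclotomicCoset, Set.mem_setOf_eq]
    constructor
    · rintro ⟨i, hi⟩
      exact ⟨i + k, by rw [hi, pow_add, hqk]; ring⟩
    · rintro ⟨i, hi⟩
      exact ⟨i + k, by rw [hi, pow_add, hqk]; ring⟩
end

section
/- Let n̄ be odd, q = 2^ℓ, and gcd(q, n̄) = 1. Then for every a ∈ ℤ/n̄ℤ with a ≠ -a, the q²-cyclotomic coset of a modulo n̄ equals the q²-cyclotomic coset of -q·a modulo n̄, if and only if there exists a nonnegative integer k with q^{2k+1} ≡ -1 (mod n̄). -/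
lemma coset_eq_of_mem (n Q : ℕ) [NeZero n] (hQ : IsUnit ((Q : ZMod n)))
    (a : ZMod n) (j : ℕ) :
    cyclotomicCoset n Q (a * (Q : ZMod n) ^ j) = cyclotomicCoset n Q a := by
  have ht : 0 < orderOf hQ.unit := orderOf_pos _
  have h1 : (Q : ZMod n) ^ orderOf hQ.unit = 1 := by
    have := pow_orderOf_eq_one hQ.unit
    have := congrArg (Units.val) this
    simpa only [Units.val_pow_eq_pow_val, hQ.unit_spec, Units.val_one] using this
  ext x
  simp only [cyclotomicCoset, Set.mem_setOf_eq]
  constructor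
  · rintro ⟨i, rfl⟩
    exact ⟨j + i, by ring⟩
  · rintro ⟨i, rfl⟩
    obtain ⟨s, hs⟩ : ∃ s, orderOf hQ.unit = s + 1 :=
      ⟨orderOf hQ.unit - 1, (Nat.sub_add_cancel ht).symm⟩
    refine ⟨j * s + i, ?_⟩
    have : a * (Q : ZMod n) ^ j * (Q : ZMod n) ^ (j * s + i)
        = a * ((Q : ZMod n) ^ orderOf hQ.unit) ^ j * (Q : ZMod n) ^ i := by
      rw [hs]; ring
    rw [this, h1, one_pow, mul_one]

/-- For odd `n̄`, `q = 2^ℓ` coprime to `n̄`: the `q²`-cyclotomic coset of `a` equals that of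
`-q·a` for every `a ≠ -a` iff `q^(2k+1) ≡ -1 (mod n̄)` for some nonnegative `k`. -/
theorem stmt_1 (n ℓ : ℕ) (hn : Odd n) (hcop : Nat.Coprime (2 ^ ℓ) n) :
    (∀ a : ZMod n, a ≠ -a →
        cyclotomicCoset n ((2 ^ ℓ) ^ 2) a =
          cyclotomicCoset n ((2 ^ ℓ) ^ 2) (-((2 : ZMod n) ^ ℓ) * a)) ↔
      ∃ k : ℕ, ((2 : ZMod n) ^ ℓ) ^ (2 * k + 1) = -1 := by
  have hn0 : n ≠ 0 := by rintro rfl; simp [Nat.odd_iff] at hn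
  haveI : NeZero n := ⟨hn0⟩
  set q : ZMod n := (2 : ZMod n) ^ ℓ with hq
  have hcast : (((2 ^ ℓ) ^ 2 : ℕ) : ZMod n) = q ^ 2 := by push_cast; rfl
  have hqu : IsUnit q := by
    have : IsUnit (((2 ^ ℓ : ℕ)) : ZMod n) := (ZMod.isUnit_iff_coprime _ n).mpr hcop
    simpa using this
  have hQu : IsUnit (((2 ^ ℓ) ^ 2 : ℕ) : ZMod n) := by
    rw [hcast]; exact hqu.pow 2
  constructor
  · intro h
    rcases eq_or_ne n 1 with rfl | hn1
    · exact ⟨0, Subsingleton.elim _ _⟩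
    · have h2 : 2 < n := by
        rcases hn with ⟨m, rfl⟩; omega
      haveI : Fact (2 < n) := ⟨h2⟩
      have hne : (1 : ZMod n) ≠ -1 := by
        intro hc; exact (ZMod.neg_one_ne_one (n := n)) hc.symm
      have := h 1 hne
      have hmem : -q * 1 ∈ cyclotomicCoset n ((2 ^ ℓ) ^ 2) (1 : ZMod n) := by
        rw [this]; exact ⟨0, by simp⟩
      obtain ⟨i, hi⟩ := hmem
      rw [hcast, mul_one, one_mul] at hi
      cases i with
      | zero =>
        refine ⟨0, ?_⟩
        simp at hi
        have : q = -1 := by linear_combination -hi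
        simpa [pow_succ] using this
      | succ m =>
        refine ⟨m, ?_⟩
        have hmul : q * (-1 : ZMod n) = q * q ^ (2 * m + 1) := by
          have : (q ^ 2) ^ (m + 1) = q * q ^ (2 * m + 1) := by ring
          rw [this] at hi
          linear_combination hi
        exact (hqu.mul_left_cancel hmul).symm
  · rintro ⟨k, hk⟩ a _
    have key : -q * a = a * (((2 ^ ℓ) ^ 2 : ℕ) : ZMod n) ^ (k + 1) := by
      rw [hcast]
      have : (q ^ 2) ^ (k + 1) = q ^ (2 * k + 1) * q := by ring
      rw [this, hk]; ring
    rw [key, coset_eq_of_mem n _ hQu a (k + 1)]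
end

section
/- Let n̄ be odd and q with gcd(q, n̄) = 1. There exists a nontrivial splitting (Z, X_0, X_1) of ℤ/n̄ℤ by μ_{-1} (with Z, X_0, X_1 unions of q-cyclotomic cosets, Z ∪ X_0 ∪ X_1 = ℤ/n̄ℤ a disjoint union, μ_{-1}(Z) = Z, μ_{-1}(X_0) = X_1, μ_{-1}(X_1) = X_0, and X_0, X_1 nonempty, with every q-cyclotomic coset contained in Z fixed setwise by μ_{-1}) if and only if there exists a ∈ ℤ/n̄ℤ whose q-cyclotomic coset C_a satisfies μ_{-1}(C_a) ≠ C_a. -/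
namespace StmtAux

lemma mem_self (n q : ℕ) (a : ZMod n) : a ∈ cyclotomicCoset n q a :=
  ⟨0, by simp⟩

lemma neg_image (n q : ℕ) (a : ZMod n) :
    (fun x : ZMod n => -x) '' cyclotomicCoset n q a = cyclotomicCoset n q (-a) := by
  ext x
  constructor
  · rintro ⟨y, ⟨i, rfl⟩, rfl⟩
    exact ⟨i, by ring⟩
  · rintro ⟨i, rfl⟩
    exact ⟨a * (q : ZMod n) ^ i, ⟨i, rfl⟩, by ring⟩

lemma pow_tot (n q : ℕ) (hn : n ≠ 0) (hcop : Nat.Coprime q n) :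
    (q : ZMod n) ^ n.totient = 1 := by
  haveI : NeZero n := ⟨hn⟩
  have h := ZMod.pow_totient (ZMod.unitOfCoprime q hcop)
  calc (q : ZMod n) ^ n.totient
      = ((ZMod.unitOfCoprime q hcop ^ n.totient : (ZMod n)ˣ) : ZMod n) := by
        rw [Units.val_pow_eq_pow_val, ZMod.coe_unitOfCoprime]
    _ = 1 := by rw [h, Units.val_one]

lemma coset_eq (n q : ℕ) (hn : n ≠ 0) (hcop : Nat.Coprime q n) {a x : ZMod n}
    (hx : x ∈ cyclotomicCoset n q a) :
    cyclotomicCoset n q x = cyclotomicCoset n q a := by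
  obtain ⟨i, rfl⟩ := hx
  have hq := pow_tot n q hn hcop
  have htot : 1 ≤ n.totient := Nat.totient_pos.2 (Nat.pos_of_ne_zero hn)
  ext y
  constructor
  · rintro ⟨j, rfl⟩
    exact ⟨i + j, by rw [pow_add]; ring⟩
  · rintro ⟨j, rfl⟩
    refine ⟨j + i * (n.totient - 1), ?_⟩
    have hkey : (q : ZMod n) ^ i * (q : ZMod n) ^ (j + i * (n.totient - 1))
        = (q : ZMod n) ^ j := by
      rw [← pow_add]
      have he : i + (j + i * (n.totient - 1)) = j + n.totient * i := by
        obtain ⟨k, hk⟩ := Nat.exists_eq_add_of_le htot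
        rw [hk, Nat.add_sub_cancel_left]
        ring
      rw [he, pow_add, pow_mul, hq, one_pow, mul_one]
    calc a * (q : ZMod n) ^ j
        = a * ((q : ZMod n) ^ i * (q : ZMod n) ^ (j + i * (n.totient - 1))) := by
          rw [hkey]
      _ = a * (q : ZMod n) ^ i * (q : ZMod n) ^ (j + i * (n.totient - 1)) := by ring

lemma coset_neg_eq (n q : ℕ) (hn : n ≠ 0) (hcop : Nat.Coprime q n) {a x : ZMod n}
    (hx : x ∈ cyclotomicCoset n q a) :
    cyclotomicCoset n q (-x) = cyclotomicCoset n q (-a) := by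
  obtain ⟨i, rfl⟩ := hx
  exact coset_eq n q hn hcop ⟨i, by ring⟩

/-- the minimal `val` of an element of a set -/
noncomputable def mval (n : ℕ) (S : Set (ZMod n)) : ℕ := sInf (ZMod.val '' S)

lemma mval_inj (n q : ℕ) (hn : n ≠ 0) (hcop : Nat.Coprime q n) {a b : ZMod n}
    (h : mval n (cyclotomicCoset n q a) = mval n (cyclotomicCoset n q b)) :
    cyclotomicCoset n q a = cyclotomicCoset n q b := by
  haveI : NeZero n := ⟨hn⟩
  have hne1 : (ZMod.val '' cyclotomicCoset n q a).Nonempty :=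
    ⟨ZMod.val a, a, mem_self n q a, rfl⟩
  have hne2 : (ZMod.val '' cyclotomicCoset n q b).Nonempty :=
    ⟨ZMod.val b, b, mem_self n q b, rfl⟩
  obtain ⟨y, hy, hyv⟩ := Nat.sInf_mem hne1
  obtain ⟨z, hz, hzv⟩ := Nat.sInf_mem hne2
  have : y = z := ZMod.val_injective n (by rw [hyv, hzv]; exact h)
  subst this
  rw [← coset_eq n q hn hcop hy, ← coset_eq n q hn hcop hz]

end StmtAux

open StmtAux in
/-- A nontrivial splitting `(Z, X₀, X₁)` of `ℤ/n̄ℤ` by `μ₋₁`, with every coset in `Z`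
fixed setwise by `μ₋₁`, exists iff some `q`-cyclotomic coset is not fixed by `μ₋₁`. -/
theorem stmt_6 (n q : ℕ) (hn : Odd n) (hcop : Nat.Coprime q n) :
    (∃ Z X0 X1 : Set (ZMod n),
      (∀ a ∈ Z, cyclotomicCoset n q a ⊆ Z) ∧
      (∀ a ∈ X0, cyclotomicCoset n q a ⊆ X0) ∧
      (∀ a ∈ X1, cyclotomicCoset n q a ⊆ X1) ∧
      Z ∪ X0 ∪ X1 = Set.univ ∧
      Disjoint Z X0 ∧ Disjoint Z X1 ∧ Disjoint X0 X1 ∧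
      (fun x : ZMod n => -x) '' Z = Z ∧
      (fun x : ZMod n => -x) '' X0 = X1 ∧
      (fun x : ZMod n => -x) '' X1 = X0 ∧
      X0.Nonempty ∧ X1.Nonempty ∧
      (∀ a : ZMod n, cyclotomicCoset n q a ⊆ Z →
        (fun x : ZMod n => -x) '' cyclotomicCoset n q a = cyclotomicCoset n q a)) ↔
    ∃ a : ZMod n,
      (fun x : ZMod n => -x) '' cyclotomicCoset n q a ≠ cyclotomicCoset n q a := by
  have hn0 : n ≠ 0 := by rintro rfl; simp [Nat.odd_iff] at hn
  constructor
  · rintro ⟨Z, X0, X1, hZc, hX0c, hX1c, huniv, hZ0, hZ1, h01, hiZ, hi0, hi1, hne0, hne1, hfix⟩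
    by_contra hc
    push_neg at hc
    obtain ⟨x, hx⟩ := hne0
    have hnx1 : -x ∈ X1 := hi0 ▸ ⟨x, hx, rfl⟩
    have hnx0 : -x ∈ X0 := by
      apply hX0c x hx
      have := hc x
      rw [← this]
      exact ⟨x, mem_self n q x, rfl⟩
    exact Set.disjoint_left.1 h01 hnx0 hnx1
  · rintro ⟨a, ha⟩
    rw [neg_image] at ha
    have hane : cyclotomicCoset n q (-a) ≠ cyclotomicCoset n q a := ha
    set C := cyclotomicCoset n q with hC
    refine ⟨{x | C (-x) = C x},
      {x | C (-x) ≠ C x ∧ mval n (C x) < mval n (C (-x))},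
      {x | C (-x) ≠ C x ∧ mval n (C (-x)) < mval n (C x)}, ?_, ?_, ?_, ?_, ?_, ?_, ?_, ?_, ?_, ?_, ?_, ?_, ?_⟩
    · intro b hb x hx
      have h1 := coset_eq n q hn0 hcop hx
      have h2 := coset_neg_eq n q hn0 hcop hx
      rw [← hC] at h1 h2
      simp only [Set.mem_setOf_eq] at hb ⊢
      rw [h1, h2]; exact hb
    · intro b hb x hx
      have h1 := coset_eq n q hn0 hcop hx
      have h2 := coset_neg_eq n q hn0 hcop hx
      rw [← hC] at h1 h2
      simp only [Set.mem_setOf_eq] at hb ⊢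
      rw [h1, h2]; exact hb
    · intro b hb x hx
      have h1 := coset_eq n q hn0 hcop hx
      have h2 := coset_neg_eq n q hn0 hcop hx
      rw [← hC] at h1 h2
      simp only [Set.mem_setOf_eq] at hb ⊢
      rw [h1, h2]; exact hb
    · ext x
      simp only [Set.mem_union, Set.mem_setOf_eq, Set.mem_univ, iff_true]
      by_cases h : C (-x) = C x
      · exact Or.inl (Or.inl h)
      · rcases lt_trichotomy (mval n (C x)) (mval n (C (-x))) with hlt | heq | hgt
        · exact Or.inl (Or.inr ⟨h, hlt⟩)
        · exact absurd (mval_inj n q hn0 hcop heq.symm) h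
        · exact Or.inr ⟨h, hgt⟩
    · rw [Set.disjoint_left]; rintro x hx ⟨h1, _⟩; exact h1 hx
    · rw [Set.disjoint_left]; rintro x hx ⟨h1, _⟩; exact h1 hx
    · rw [Set.disjoint_left]; rintro x ⟨_, h2⟩ ⟨_, h2'⟩; omega
    · ext x
      constructor
      · rintro ⟨y, hy, rfl⟩
        simp only [Set.mem_setOf_eq] at hy ⊢
        rw [neg_neg]; exact hy.symm
      · intro hx
        refine ⟨-x, ?_, neg_neg x⟩
        simp only [Set.mem_setOf_eq] at hx ⊢
        rw [neg_neg]; exact hx.symm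
    · ext x
      constructor
      · rintro ⟨y, ⟨h1, h2⟩, rfl⟩
        refine ⟨?_, ?_⟩ <;> rw [neg_neg]
        · exact fun h => h1 h.symm
        · exact h2
      · rintro ⟨h1, h2⟩
        refine ⟨-x, ⟨?_, ?_⟩, neg_neg x⟩ <;> rw [neg_neg]
        · exact fun h => h1 h.symm
        · exact h2
    · ext x
      constructor
      · rintro ⟨y, ⟨h1, h2⟩, rfl⟩
        refine ⟨?_, ?_⟩ <;> rw [neg_neg]
        · exact fun h => h1 h.symm
        · exact h2
      · rintro ⟨h1, h2⟩
        refine ⟨-x, ⟨?_, ?_⟩, neg_neg x⟩ <;> rw [neg_neg]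
        · exact fun h => h1 h.symm
        · exact h2
    · rcases lt_trichotomy (mval n (C a)) (mval n (C (-a))) with hlt | heq | hgt
      · exact ⟨a, hane, hlt⟩
      · exact absurd (mval_inj n q hn0 hcop heq.symm) hane
      · exact ⟨-a, by rw [neg_neg]; exact fun h => hane h.symm, by rw [neg_neg]; exact hgt⟩
    · rcases lt_trichotomy (mval n (C a)) (mval n (C (-a))) with hlt | heq | hgt
      · exact ⟨-a, by rw [neg_neg]; exact fun h => hane h.symm, by rw [neg_neg]; exact hlt⟩
      · exact absurd (mval_inj n q hn0 hcop heq.symm) hane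
      · exact ⟨a, hane, hgt⟩
    · intro b hb
      have : b ∈ {x | C (-x) = C x} := hb (mem_self n q b)
      rw [neg_image]
      exact this
end

section
/- Let n̄ be odd and q = 2^r with gcd(q, n̄) = 1. There exists a nontrivial splitting (Z, X_0, X_1) of ℤ/n̄ℤ by μ_{-1} in which every q-cyclotomic coset in Z is fixed setwise by μ_{-1} if and only if 2^{rk} ≢ -1 (mod n̄) for all positive integers k. -/
/-- For `q = 2^r` coprime to odd `n̄`: a nontrivial splitting of `ℤ/n̄ℤ` by `μ₋₁`,
with every `q`-cyclotomic coset in `Z` fixed setwise by `μ₋₁`, exists iff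
`2^{rk} ≢ -1 (mod n̄)` for all positive `k`. -/
theorem stmt_7 (n r : ℕ) (hn : Odd n) (hr : 0 < r)
    (hcop : Nat.Coprime (2 ^ r) n) :
    (∃ Z X0 X1 : Set (ZMod n),
      (∀ a ∈ Z, cyclotomicCoset n (2 ^ r) a ⊆ Z) ∧
      (∀ a ∈ X0, cyclotomicCoset n (2 ^ r) a ⊆ X0) ∧
      (∀ a ∈ X1, cyclotomicCoset n (2 ^ r) a ⊆ X1) ∧
      Z ∪ X0 ∪ X1 = Set.univ ∧
      Disjoint Z X0 ∧ Disjoint Z X1 ∧ Disjoint X0 X1 ∧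
      (fun x : ZMod n => -x) '' Z = Z ∧
      (fun x : ZMod n => -x) '' X0 = X1 ∧
      (fun x : ZMod n => -x) '' X1 = X0 ∧
      X0.Nonempty ∧ X1.Nonempty ∧
      (∀ a : ZMod n, cyclotomicCoset n (2 ^ r) a ⊆ Z →
        (fun x : ZMod n => -x) '' cyclotomicCoset n (2 ^ r) a =
          cyclotomicCoset n (2 ^ r) a)) ↔
    ∀ k : ℕ, 0 < k → (2 : ZMod n) ^ (r * k) ≠ -1 := by
  classical
  have hcast : ∀ i : ℕ, ((2 ^ r : ℕ) : ZMod n) ^ i = (2 : ZMod n) ^ (r * i) := by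
    intro i; push_cast; rw [← pow_mul]
  constructor
  · rintro ⟨Z, X0, X1, hZ, hX0, hX1, huniv, hZ0, hZ1, h01, himZ, him0, him1,
      ⟨a, ha⟩, hne1, hfix⟩ k hk hcontra
    have hmem : -a ∈ cyclotomicCoset n (2 ^ r) a :=
      ⟨k, by rw [hcast, hcontra]; ring⟩
    have h1 : -a ∈ X0 := hX0 a ha hmem
    have h2 : -a ∈ X1 := him0 ▸ Set.mem_image_of_mem _ ha
    exact Set.disjoint_left.mp h01 h1 h2
  · intro h
    rcases eq_or_ne n 1 with rfl | hn1
    · exact absurd (Subsingleton.elim _ _) (h 1 one_pos)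
    have hn3 : 2 < n := by rcases hn with ⟨m, rfl⟩; omega
    haveI : NeZero n := ⟨by omega⟩
    set C := cyclotomicCoset n (2 ^ r) with hCdef
    have hself : ∀ a : ZMod n, a ∈ C a := fun a => ⟨0, by simp⟩
    set U : (ZMod n)ˣ := ZMod.unitOfCoprime (2 ^ r) hcop with hU
    have hUval : (U : ZMod n) = ((2 ^ r : ℕ) : ZMod n) := ZMod.coe_unitOfCoprime _ _
    obtain ⟨m, hmpos, hone⟩ : ∃ m : ℕ, 0 < m ∧ ((2 ^ r : ℕ) : ZMod n) ^ m = 1 :=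
      ⟨orderOf U, orderOf_pos U, by
        rw [← hUval, ← Units.val_pow_eq_pow_val, pow_orderOf_eq_one, Units.val_one]⟩
    have htrans : ∀ a b c : ZMod n, b ∈ C a → c ∈ C b → c ∈ C a := by
      rintro a b c ⟨i, rfl⟩ ⟨j, rfl⟩
      exact ⟨i + j, by rw [pow_add]; ring⟩
    have hsymm : ∀ a b : ZMod n, b ∈ C a → a ∈ C b := by
      rintro a b ⟨i, rfl⟩
      refine ⟨i * (m - 1), ?_⟩
      rw [mul_assoc, ← pow_add]
      have hexp : i + i * (m - 1) = m * i := by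
        cases m with
        | zero => exact absurd hmpos (lt_irrefl 0)
        | succ k => rw [Nat.succ_sub_one, Nat.succ_mul]; ring
      rw [hexp, pow_mul, hone, one_pow, mul_one]
    have hCeq : ∀ a b : ZMod n, b ∈ C a → C b = C a := by
      intro a b hb
      ext x
      exact ⟨fun hx => htrans a b x hb hx, fun hx => htrans b a x (hsymm a b hb) hx⟩
    have hnegmem : ∀ a b : ZMod n, b ∈ C a → -b ∈ C (-a) := by
      rintro a b ⟨i, rfl⟩; exact ⟨i, by ring⟩
    have hnotneg : ∀ a b : ZMod n, b ∈ C a → -b ∈ C b → -a ∈ C a := by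
      intro a b hb hnb
      have h1 : C b = C a := hCeq a b hb
      have h2 : -b ∈ C a := h1 ▸ hnb
      have h3 : C (-b) = C a := hCeq a (-b) h2
      have h4 : -a ∈ C (-b) := hnegmem b a (hsymm a b hb)
      exact h3 ▸ h4
    set key : ZMod n → ℕ := fun a => sInf (ZMod.val '' C a) with hkey
    have hkey_mem : ∀ a : ZMod n, key a ∈ ZMod.val '' C a := fun a =>
      Nat.sInf_mem ⟨a.val, a, hself a, rfl⟩
    have hkeyC : ∀ a b : ZMod n, b ∈ C a → key b = key a := by
      intro a b hb
      simp only [hkey]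
      rw [hCeq a b hb]
    have hkey_inj : ∀ a b : ZMod n, key a = key b → C a = C b := by
      intro a b hab
      obtain ⟨x, hx, hxv⟩ := hkey_mem a
      obtain ⟨y, hy, hyv⟩ := hkey_mem b
      have hxy : x = y := ZMod.val_injective n (by rw [hxv, hyv, hab])
      rw [← hCeq a x hx, hxy, hCeq b y hy]
    have hkeyne : ∀ x : ZMod n, -x ∉ C x → key x ≠ key (-x) := by
      intro x hx heq
      exact hx ((hkey_inj x (-x) heq).symm ▸ hself (-x))
    refine ⟨{x | -x ∈ C x}, {x | -x ∉ C x ∧ key x < key (-x)},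
      {x | -x ∉ C x ∧ key (-x) < key x}, ?_, ?_, ?_, ?_, ?_, ?_, ?_, ?_, ?_, ?_, ?_, ?_, ?_⟩
    · -- Z closed under cosets
      intro a ha b hb
      have h1 : -b ∈ C (-a) := hnegmem a b hb
      have h2 : C (-a) = C a := hCeq a (-a) ha
      have h3 : C b = C a := hCeq a b hb
      show -b ∈ C b
      rw [h3]
      exact h2 ▸ h1
    · -- X0 closed
      rintro a ⟨hna, hk⟩ b hb
      refine ⟨fun hnb => hna (hnotneg a b hb hnb), ?_⟩
      rw [hkeyC a b hb, hkeyC (-a) (-b) (hnegmem a b hb)]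
      exact hk
    · -- X1 closed
      rintro a ⟨hna, hk⟩ b hb
      refine ⟨fun hnb => hna (hnotneg a b hb hnb), ?_⟩
      rw [hkeyC a b hb, hkeyC (-a) (-b) (hnegmem a b hb)]
      exact hk
    · -- union
      ext x
      simp only [Set.mem_union, Set.mem_setOf_eq, Set.mem_univ, iff_true]
      by_cases hx : -x ∈ C x
      · exact Or.inl (Or.inl hx)
      · rcases lt_or_gt_of_ne (hkeyne x hx) with h1 | h1
        · exact Or.inl (Or.inr ⟨hx, h1⟩)
        · exact Or.inr ⟨hx, h1⟩
    · exact Set.disjoint_left.mpr fun x hx hx' => hx'.1 hx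
    · exact Set.disjoint_left.mpr fun x hx hx' => hx'.1 hx
    · exact Set.disjoint_left.mpr fun x hx hx' => absurd hx.2 (not_lt.mpr hx'.2.le)
    · -- image of Z
      ext y
      constructor
      · rintro ⟨x, hx, rfl⟩
        show -(-x) ∈ C (-x)
        rw [neg_neg, hCeq x (-x) hx]
        exact hself x
      · intro hy
        refine ⟨-y, ?_, neg_neg y⟩
        show -(-y) ∈ C (-y)
        rw [neg_neg, hCeq y (-y) hy]
        exact hself y
    · -- image of X0 = X1
      ext y
      constructor
      · rintro ⟨x, ⟨hnx, hk⟩, rfl⟩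
        refine ⟨?_, ?_⟩
        · rw [neg_neg]
          intro hxm
          exact hnx ((hCeq (-x) x hxm).symm ▸ hself (-x))
        · rw [neg_neg]; exact hk
      · rintro ⟨hny, hk⟩
        refine ⟨-y, ⟨?_, ?_⟩, neg_neg y⟩
        · rw [neg_neg]
          intro hym
          exact hny ((hCeq (-y) y hym).symm ▸ hself (-y))
        · rw [neg_neg]; exact hk
    · -- image of X1 = X0
      ext y
      constructor
      · rintro ⟨x, ⟨hnx, hk⟩, rfl⟩
        refine ⟨?_, ?_⟩
        · rw [neg_neg]
          intro hxm
          exact hnx ((hCeq (-x) x hxm).symm ▸ hself (-x))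
        · rw [neg_neg]; exact hk
      · rintro ⟨hny, hk⟩
        refine ⟨-y, ⟨?_, ?_⟩, neg_neg y⟩
        · rw [neg_neg]
          intro hym
          exact hny ((hCeq (-y) y hym).symm ▸ hself (-y))
        · rw [neg_neg]; exact hk
    · -- X0 nonempty
      have hne : (-1 : ZMod n) ∉ C 1 := by
        rintro ⟨i, hi⟩
        rw [one_mul, hcast] at hi
        cases i with
        | zero =>
          simp only [Nat.mul_zero, pow_zero] at hi
          haveI : Fact (2 < n) := ⟨hn3⟩
          exact ZMod.neg_one_ne_one hi
        | succ j => exact h (j + 1) (Nat.succ_pos j) hi.symm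
      have hne1 : (1 : ZMod n) ∉ C (-1) := fun hmem => hne (by
        rw [hCeq (-1) 1 hmem]; exact hself (-1))
      rcases lt_or_gt_of_ne (hkeyne 1 hne) with h1 | h1
      · exact ⟨1, hne, h1⟩
      · exact ⟨-1, by rw [neg_neg]; exact hne1, by rw [neg_neg]; exact h1⟩
    · -- X1 nonempty
      have hne : (-1 : ZMod n) ∉ C 1 := by
        rintro ⟨i, hi⟩
        rw [one_mul, hcast] at hi
        cases i with
        | zero =>
          simp only [Nat.mul_zero, pow_zero] at hi
          haveI : Fact (2 < n) := ⟨hn3⟩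
          exact ZMod.neg_one_ne_one hi
        | succ j => exact h (j + 1) (Nat.succ_pos j) hi.symm
      have hne1 : (1 : ZMod n) ∉ C (-1) := fun hmem => hne (by
        rw [hCeq (-1) 1 hmem]; exact hself (-1))
      rcases lt_or_gt_of_ne (hkeyne 1 hne) with h1 | h1
      · exact ⟨-1, by rw [neg_neg]; exact hne1, by rw [neg_neg]; exact h1⟩
      · exact ⟨1, hne, h1⟩
    · -- cosets in Z are fixed
      intro a haZ
      have ha : -a ∈ C a := haZ (hself a)
      have hCa : C (-a) = C a := hCeq a (-a) ha
      ext y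
      constructor
      · rintro ⟨x, hx, rfl⟩
        exact hCa ▸ hnegmem a x hx
      · intro hy
        refine ⟨-y, ?_, neg_neg y⟩
        exact hCa ▸ hnegmem a y hy
end

section
/- Let n̄ be odd, ℓ ≥ 1, q = 2^ℓ, q² = 2^{2ℓ}, gcd(q, n̄) = 1. There exists a nontrivial splitting (Z, X_0, X_1) of ℤ/n̄ℤ by the multiplier μ_{-2^ℓ} (where Z, X_0, X_1 are unions of 2^{2ℓ}-cyclotomic cosets and every 2^{2ℓ}-cyclotomic coset in Z is fixed setwise by μ_{-2^ℓ}) if and only if 2^{ℓ(2k+1)} ≢ -1 (mod n̄) for all nonnegative integers k. -/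
/-- For `q = 2^ℓ` (ℓ ≥ 1) coprime to odd `n̄`: a nontrivial splitting of `ℤ/n̄ℤ` by the
multiplier `μ_{-2^ℓ}` (with `Z, X₀, X₁` unions of `2^{2ℓ}`-cyclotomic cosets, and every
coset in `Z` fixed setwise by `μ_{-2^ℓ}`) exists iff `2^{ℓ(2k+1)} ≢ -1 (mod n̄)` for all
nonnegative `k`. -/
theorem stmt_8 (n ℓ : ℕ) (hn : Odd n) (hℓ : 1 ≤ ℓ)
    (hcop : Nat.Coprime (2 ^ ℓ) n) :
    (∃ Z X0 X1 : Set (ZMod n),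
      (∀ a ∈ Z, cyclotomicCoset n (2 ^ (2 * ℓ)) a ⊆ Z) ∧
      (∀ a ∈ X0, cyclotomicCoset n (2 ^ (2 * ℓ)) a ⊆ X0) ∧
      (∀ a ∈ X1, cyclotomicCoset n (2 ^ (2 * ℓ)) a ⊆ X1) ∧
      Z ∪ X0 ∪ X1 = Set.univ ∧
      Disjoint Z X0 ∧ Disjoint Z X1 ∧ Disjoint X0 X1 ∧
      (fun x : ZMod n => -((2 : ZMod n) ^ ℓ) * x) '' Z = Z ∧
      (fun x : ZMod n => -((2 : ZMod n) ^ ℓ) * x) '' X0 = X1 ∧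
      (fun x : ZMod n => -((2 : ZMod n) ^ ℓ) * x) '' X1 = X0 ∧
      X0.Nonempty ∧ X1.Nonempty ∧
      (∀ a : ZMod n, cyclotomicCoset n (2 ^ (2 * ℓ)) a ⊆ Z →
        (fun x : ZMod n => -((2 : ZMod n) ^ ℓ) * x) '' cyclotomicCoset n (2 ^ (2 * ℓ)) a =
          cyclotomicCoset n (2 ^ (2 * ℓ)) a)) ↔
    ∀ k : ℕ, (2 : ZMod n) ^ (ℓ * (2 * k + 1)) ≠ -1 := by
  haveI : NeZero n := ⟨by rintro rfl; exact (Nat.not_odd_iff_even.mpr Even.zero) hn⟩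
  have key : ((2 ^ (2 * ℓ) : ℕ) : ZMod n) = (2 : ZMod n) ^ (2 * ℓ) := by push_cast; ring
  constructor
  · rintro ⟨Z, X0, X1, hZ, hX0, hX1, hun, d01, d02, d12, i0, i1, i2, ⟨x, hx⟩, -, -⟩ k hk
    have hmem : -((2 : ZMod n) ^ ℓ) * x ∈ cyclotomicCoset n (2 ^ (2 * ℓ)) x := by
      refine ⟨k + 1, ?_⟩
      rw [key, ← pow_mul, show 2 * ℓ * (k + 1) = ℓ * (2 * k + 1) + ℓ by ring, pow_add, hk]
      ring
    have h1 : -((2 : ZMod n) ^ ℓ) * x ∈ X0 := hX0 x hx hmem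
    have h2 : -((2 : ZMod n) ^ ℓ) * x ∈ X1 := by
      rw [← i1]; exact ⟨x, hx, rfl⟩
    exact (Set.disjoint_left.mp d12 h1) h2
  · intro h
    set s : ZMod n := -((2 : ZMod n) ^ ℓ) with hs
    set u : (ZMod n)ˣ := -(ZMod.unitOfCoprime (2 ^ ℓ) hcop) with hu
    have hucoe : (u : ZMod n) = s := by
      rw [hu, Units.val_neg, ZMod.coe_unitOfCoprime, hs]
      push_cast; ring
    set d := orderOf u with hd
    have hd0 : 0 < d := orderOf_pos u
    have hsd : s ^ d = 1 := by
      rw [← hucoe, ← Units.val_pow_eq_pow_val, pow_orderOf_eq_one, Units.val_one]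
    -- d is even
    have hdeven : Even d := by
      by_contra hodd
      rw [Nat.not_even_iff_odd] at hodd
      obtain ⟨k, hkk⟩ := hodd
      refine h k ?_
      have h1 : ((2 : ZMod n) ^ ℓ) ^ d = -1 := by
        have := hsd
        rw [hs, Odd.neg_pow ⟨k, by omega⟩] at this
        linear_combination -this
      rw [← h1, ← pow_mul, hkk]
    obtain ⟨c, hc⟩ : ∃ c, d = c + 1 := ⟨d - 1, by omega⟩
    have hcodd : Odd c := by
      rcases hdeven with ⟨e, he⟩; exact ⟨e - 1, by omega⟩
    have hsm : ∀ m : ℕ, s ^ (m * d) = 1 := fun m => by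
      rw [mul_comm, pow_mul, hsd, one_pow]
    have hcyc : ∀ (x : ZMod n) (m : ℕ), x * s ^ (m * d) = x := fun x m => by
      rw [hsm, mul_one]
    -- the orbit setoid
    letI st : Setoid (ZMod n) :=
      ⟨fun x y => ∃ m : ℕ, y = x * s ^ m,
       ⟨fun x => ⟨0, by simp⟩,
        fun {x y} ⟨m, hm⟩ => ⟨m * c, by
          rw [hm, mul_assoc, ← pow_add, show m + m * c = m * d by rw [hc]; ring, hcyc]⟩,
        fun {x y z} ⟨m, hm⟩ ⟨k, hk⟩ => ⟨m + k, by rw [hk, hm, mul_assoc, ← pow_add]⟩⟩⟩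
    set rep : ZMod n → ZMod n := fun x => (Quotient.mk st x).out with hrep
    have hrep1 : ∀ x, ∃ m : ℕ, x = rep x * s ^ m := fun x =>
      Quotient.exact (Quotient.out_eq (Quotient.mk st x))
    have hrep2 : ∀ (x : ZMod n) (m : ℕ), rep (x * s ^ m) = rep x := fun x m => by
      show (Quotient.mk st (x * s ^ m)).out = (Quotient.mk st x).out
      rw [Quotient.sound (st.iseqv.symm (⟨m, rfl⟩ : st.r x (x * s ^ m)))]
    have hrepidem : ∀ x, rep (rep x) = rep x := fun x => by
      show (Quotient.mk st (Quotient.mk st x).out).out = (Quotient.mk st x).out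
      rw [Quotient.out_eq]
    -- the sets
    set Z : Set (ZMod n) := {x | ∃ i : ℕ, s * x = x * s ^ (2 * i)} with hZdef
    set X0 : Set (ZMod n) := {x | x ∉ Z ∧ ∃ i : ℕ, x = rep x * s ^ (2 * i)} with hX0def
    set X1 : Set (ZMod n) := {x | x ∉ Z ∧ x ∉ X0} with hX1def
    -- saturation lemmas
    have hZsat : ∀ (x : ZMod n) (m : ℕ), x ∈ Z → x * s ^ m ∈ Z := by
      rintro x m ⟨i, hi⟩
      exact ⟨i, by rw [← mul_assoc, hi]; ring⟩
    have hZsat' : ∀ (x : ZMod n) (m : ℕ), x * s ^ m ∈ Z → x ∈ Z := by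
      intro x m hxm
      have := hZsat _ (m * c) hxm
      rwa [mul_assoc, ← pow_add, show m + m * c = m * d by rw [hc]; ring, hcyc] at this
    have hZs : ∀ y : ZMod n, s * y ∈ Z → y ∈ Z := fun y hy =>
      hZsat' y 1 (by rwa [pow_one, mul_comm])
    -- key cancellation lemma
    have hL1 : ∀ (a : ZMod n) (j k : ℕ), Odd j → a * s ^ j = a * s ^ (2 * k) → a ∈ Z := by
      intro a j k hj heq
      have h2 : a * s ^ j * s ^ (j * c + 1) = a * s ^ (2 * k) * s ^ (j * c + 1) := by rw [heq]
      rw [mul_assoc, mul_assoc, ← pow_add, ← pow_add,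
        show j + (j * c + 1) = j * d + 1 by rw [hc]; ring,
        pow_succ, ← mul_assoc, hcyc] at h2
      have hE : Even (2 * k + (j * c + 1)) := (even_two_mul k).add (hj.mul hcodd).add_one
      obtain ⟨M, hM⟩ := hE
      refine ⟨M, ?_⟩
      rw [mul_comm s a, h2, hM, two_mul]
    have hX0sat : ∀ (x : ZMod n) (m : ℕ), x ∈ X0 → x * s ^ (2 * m) ∈ X0 := by
      rintro x m ⟨hxz, i, hi⟩
      refine ⟨fun hz => hxz (hZsat' x _ hz), i + m, ?_⟩
      conv_lhs => rw [hi]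
      rw [hrep2, mul_assoc, ← pow_add, show 2 * i + 2 * m = 2 * (i + m) by ring]
    have hX0sat' : ∀ (x : ZMod n) (m : ℕ), x * s ^ (2 * m) ∈ X0 → x ∈ X0 := by
      intro x m hx
      have := hX0sat _ (m * c) hx
      rwa [mul_assoc, ← pow_add, show 2 * m + 2 * (m * c) = 2 * m * d by rw [hc]; ring,
        hcyc] at this
    -- membership translation for cosets
    have hC : ∀ a x : ZMod n,
        x ∈ cyclotomicCoset n (2 ^ (2 * ℓ)) a ↔ ∃ i : ℕ, x = a * s ^ (2 * i) := by
      intro a x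
      have key2 : ∀ i : ℕ, ((2 ^ (2 * ℓ) : ℕ) : ZMod n) ^ i = s ^ (2 * i) := by
        intro i
        rw [key, show s ^ (2 * i) = (s ^ 2) ^ i from pow_mul s 2 i]
        congr 1
        rw [hs]
        ring
      constructor
      · rintro ⟨i, rfl⟩; exact ⟨i, by rw [key2]⟩
      · rintro ⟨i, rfl⟩; exact ⟨i, by rw [key2]⟩
    -- components
    have c1 : ∀ a ∈ Z, cyclotomicCoset n (2 ^ (2 * ℓ)) a ⊆ Z := by
      intro a ha x hx
      obtain ⟨i, rfl⟩ := (hC a x).mp hx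
      exact hZsat a _ ha
    have c2 : ∀ a ∈ X0, cyclotomicCoset n (2 ^ (2 * ℓ)) a ⊆ X0 := by
      intro a ha x hx
      obtain ⟨i, rfl⟩ := (hC a x).mp hx
      exact hX0sat a i ha
    have c3 : ∀ a ∈ X1, cyclotomicCoset n (2 ^ (2 * ℓ)) a ⊆ X1 := by
      rintro a ⟨haz, hax⟩ x hx
      obtain ⟨i, rfl⟩ := (hC a x).mp hx
      exact ⟨fun hz => haz (hZsat' a _ hz), fun h0 => hax (hX0sat' a i h0)⟩
    have c4 : Z ∪ X0 ∪ X1 = Set.univ := by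
      ext x
      simp only [Set.mem_union, Set.mem_univ, iff_true]
      by_cases h1 : x ∈ Z
      · exact Or.inl (Or.inl h1)
      by_cases h2 : x ∈ X0
      · exact Or.inl (Or.inr h2)
      · exact Or.inr ⟨h1, h2⟩
    have c5 : Disjoint Z X0 := Set.disjoint_left.mpr fun {x} hz hx => hx.1 hz
    have c6 : Disjoint Z X1 := Set.disjoint_left.mpr fun {x} hz hx => hx.1 hz
    have c7 : Disjoint X0 X1 := Set.disjoint_left.mpr fun {x} hx hx1 => hx1.2 hx
    have c8 : (fun x : ZMod n => s * x) '' Z = Z := by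
      apply Set.Subset.antisymm
      · rintro _ ⟨y, hy, rfl⟩
        obtain ⟨i, hi⟩ := hy
        show s * y ∈ Z
        rw [hi]
        exact hZsat y _ ⟨i, hi⟩
      · intro x hx
        refine ⟨x * s ^ c, hZsat x c hx, ?_⟩
        show s * (x * s ^ c) = x
        rw [mul_comm s, mul_assoc, ← pow_succ, ← hc, hsd, mul_one]
    have c9 : (fun x : ZMod n => s * x) '' X0 = X1 := by
      apply Set.Subset.antisymm
      · rintro _ ⟨y, ⟨hyz, i, hi⟩, rfl⟩
        show s * y ∈ X1
        refine ⟨fun hz => hyz (hZs y hz), ?_⟩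
        rintro ⟨-, j, hj⟩
        rw [show s * y = y * s ^ 1 by rw [pow_one, mul_comm], hrep2] at hj
        conv_lhs at hj => rw [hi]
        rw [mul_assoc, ← pow_add] at hj
        have : rep y ∈ Z := hL1 (rep y) (2 * i + 1) j ⟨i, by ring⟩ hj
        exact hyz (hi ▸ hZsat (rep y) (2 * i) this)
      · rintro x ⟨hxz, hx0⟩
        obtain ⟨m, hm⟩ := hrep1 x
        have hmodd : Odd m := by
          rcases Nat.even_or_odd m with he | ho
          · obtain ⟨i, hi⟩ := he
            exact absurd ⟨hxz, i, by rw [two_mul, ← hi, ← hm]⟩ hx0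
          · exact ho
        obtain ⟨M, hM⟩ := hmodd.add_odd hcodd
        refine ⟨x * s ^ c, ⟨fun hz => hxz (hZsat' x c hz), M, ?_⟩, ?_⟩
        · conv_lhs => rw [hm]
          rw [hrep2, mul_assoc, ← pow_add, hM, two_mul]
        · show s * (x * s ^ c) = x
          rw [mul_comm s, mul_assoc, ← pow_succ, ← hc, hsd, mul_one]
    have c10 : (fun x : ZMod n => s * x) '' X1 = X0 := by
      apply Set.Subset.antisymm
      · rintro _ ⟨y, ⟨hyz, hy0⟩, rfl⟩
        show s * y ∈ X0
        obtain ⟨m, hm⟩ := hrep1 y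
        have hmodd : Odd m := by
          rcases Nat.even_or_odd m with he | ho
          · obtain ⟨i, hi⟩ := he
            exact absurd ⟨hyz, i, by rw [two_mul, ← hi, ← hm]⟩ hy0
          · exact ho
        obtain ⟨i, hi⟩ := hmodd
        refine ⟨fun hz => hyz (hZs y hz), i + 1, ?_⟩
        rw [show s * y = y * s ^ 1 by rw [pow_one, mul_comm], hrep2]
        conv_lhs => rw [hm]
        rw [mul_assoc, ← pow_add, hi, show 2 * i + 1 + 1 = 2 * (i + 1) from by ring]
      · rintro y ⟨hyz, i, hi⟩
        refine ⟨y * s ^ c, ⟨fun hz => hyz (hZsat' y c hz), ?_⟩, ?_⟩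
        · rintro ⟨-, j, hj⟩
          rw [hrep2] at hj
          conv_lhs at hj => rw [hi]
          rw [mul_assoc, ← pow_add] at hj
          have hodd2 : Odd (2 * i + c) := by
            obtain ⟨e, he⟩ := hcodd; exact ⟨i + e, by omega⟩
          have : rep y ∈ Z := hL1 (rep y) (2 * i + c) j hodd2 hj
          exact hyz (hi ▸ hZsat (rep y) (2 * i) this)
        · show s * (y * s ^ c) = y
          rw [mul_comm s, mul_assoc, ← pow_succ, ← hc, hsd, mul_one]
    have hone : (1 : ZMod n) ∉ Z := by
      rintro ⟨i, hi⟩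
      rw [mul_one, one_mul] at hi
      have hu2 : u ^ 1 = u ^ (2 * i) := by
        apply Units.ext
        rw [Units.val_pow_eq_pow_val, Units.val_pow_eq_pow_val, hucoe, pow_one]
        exact hi
      have := pow_eq_pow_iff_modEq.mp hu2
      rw [← hd] at this
      have h2 : (1 : ℕ) ≡ 2 * i [MOD 2] := this.of_dvd hdeven.two_dvd
      simp [Nat.ModEq, Nat.mul_mod_right] at h2
    have ht0 : rep 1 ∈ X0 := by
      have htz : rep 1 ∉ Z := by
        intro htz
        obtain ⟨m, hm⟩ := hrep1 1
        exact hone (hm ▸ hZsat (rep 1) m htz)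
      exact ⟨htz, 0, by rw [hrepidem, pow_zero, mul_one]⟩
    have c11 : X0.Nonempty := ⟨rep 1, ht0⟩
    have c12 : X1.Nonempty := ⟨s * rep 1, by rw [← c9]; exact ⟨rep 1, ht0, rfl⟩⟩
    have c13 : ∀ a : ZMod n, cyclotomicCoset n (2 ^ (2 * ℓ)) a ⊆ Z →
        (fun x : ZMod n => s * x) '' cyclotomicCoset n (2 ^ (2 * ℓ)) a =
          cyclotomicCoset n (2 ^ (2 * ℓ)) a := by
      intro a ha
      have haZ : a ∈ Z := ha ⟨0, by rw [pow_zero, mul_one]⟩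
      obtain ⟨i, hi⟩ := haZ
      apply Set.Subset.antisymm
      · rintro _ ⟨y, hy, rfl⟩
        obtain ⟨j, rfl⟩ := (hC a y).mp hy
        refine (hC a _).mpr ⟨i + j, ?_⟩
        show s * (a * s ^ (2 * j)) = a * s ^ (2 * (i + j))
        rw [← mul_assoc, hi, mul_assoc, ← pow_add]
        congr 1
        ring
      · intro x hx
        obtain ⟨j, rfl⟩ := (hC a x).mp hx
        refine ⟨a * s ^ (2 * (j + i * c)), (hC a _).mpr ⟨j + i * c, rfl⟩, ?_⟩
        show s * (a * s ^ (2 * (j + i * c))) = a * s ^ (2 * j)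
        rw [← mul_assoc, hi, mul_assoc, ← pow_add,
          show 2 * i + 2 * (j + i * c) = 2 * j + 2 * i * d by rw [hc]; ring,
          pow_add, ← mul_assoc, mul_comm, ← mul_assoc]
        rw [hsm, one_mul, mul_comm]
    exact ⟨Z, X0, X1, c1, c2, c3, c4, c5, c6, c7, c8, c9, c10, c11, c12, c13⟩
end

section
/- Let n̄ be odd and q a power of 2 coprime to n̄. The factorization of x^{n̄} − 1 over F_q contains at least one pair {h, h*} of distinct reciprocal monic irreducible factors if and only if q^k ≢ -1 (mod n̄) for all positive integers k. -/
open Polynomial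

/-- The reciprocal polynomial `f*(x) = f(0)⁻¹ · x^(deg f) · f(1/x)`. -/
noncomputable def recip {F : Type*} [Field F] (f : Polynomial F) : Polynomial F :=
  Polynomial.C (f.coeff 0)⁻¹ * f.reverse

section Aux

variable {F K : Type*} [Field F] [Fintype F] [Field K] [Algebra F K]

lemma recip_monic {f : Polynomial F} (hf : f.Monic) (h0 : f.coeff 0 ≠ 0) :
    (recip f).Monic := by
  have hfne : f ≠ 0 := hf.ne_zero
  have htd : f.natTrailingDegree = 0 := by
    rw [natTrailingDegree_eq_zero]; exact Or.inr h0
  have htc : f.trailingCoeff = f.coeff 0 := by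
    rw [trailingCoeff, htd]
  unfold recip Monic
  rw [leadingCoeff_mul, leadingCoeff_C, reverse_leadingCoeff, htc,
    inv_mul_cancel₀ h0]

lemma recip_natDegree {f : Polynomial F} (hf : f ≠ 0) (h0 : f.coeff 0 ≠ 0) :
    (recip f).natDegree = f.natDegree := by
  have htd : f.natTrailingDegree = 0 := by
    rw [natTrailingDegree_eq_zero]; exact Or.inr h0
  unfold recip
  rw [natDegree_C_mul (inv_ne_zero h0), reverse_natDegree, htd, Nat.sub_zero]

lemma recip_aeval_zero {f : Polynomial F} (h0 : f.coeff 0 ≠ 0) {x : K} (hx : x ≠ 0) :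
    aeval x⁻¹ (recip f) = 0 ↔ aeval x f = 0 := by
  have : Invertible x := invertibleOfNonzero hx
  have hi : x⁻¹ = ⅟ x := (invOf_eq_inv x).symm
  unfold recip
  rw [map_mul, aeval_C, mul_eq_zero]
  constructor
  · rintro (h | h)
    · exact absurd ((_root_.map_eq_zero (algebraMap F K)).mp h) (inv_ne_zero h0)
    · rw [hi] at h
      exact (eval₂_reverse_eq_zero_iff (algebraMap F K) x f).mp h
  · intro h
    refine Or.inr ?_
    rw [hi]
    exact (eval₂_reverse_eq_zero_iff (algebraMap F K) x f).mpr h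

/-- Elements of an extension fixed by `x ↦ x ^ q` lie in the base field. -/
lemma fixed_mem {x : K} (hx : x ^ Fintype.card F = x) :
    ∃ a : F, algebraMap F K a = x := by
  classical
  set q := Fintype.card F with hq
  have h1q : 1 < q := Fintype.one_lt_card
  set p : K[X] := X ^ q - X with hp
  have hpne : p ≠ 0 := FiniteField.X_pow_card_sub_X_ne_zero K h1q
  have hdeg : p.natDegree = q := FiniteField.X_pow_card_sub_X_natDegree_eq K h1q
  set S : Finset K := Finset.univ.image (algebraMap F K) with hS
  have hcardS : S.card = q := by
    rw [hS, Finset.card_image_of_injective _ (algebraMap F K).injective,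
      Finset.card_univ]
  have hsub : S ⊆ p.roots.toFinset := by
    intro y hy
    rw [hS, Finset.mem_image] at hy
    obtain ⟨a, -, rfl⟩ := hy
    rw [Multiset.mem_toFinset, mem_roots hpne]
    simp only [IsRoot, hp, eval_sub, eval_pow, eval_X]
    rw [← map_pow, hq, FiniteField.pow_card, sub_self]
  have hxmem : x ∈ p.roots.toFinset := by
    rw [Multiset.mem_toFinset, mem_roots hpne]
    simp only [IsRoot, hp, eval_sub, eval_pow, eval_X]
    rw [hx, sub_self]
  have hle : p.roots.toFinset.card ≤ S.card := by
    calc p.roots.toFinset.card ≤ Multiset.card p.roots := Multiset.toFinset_card_le _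
      _ ≤ p.natDegree := p.card_roots'
      _ = q := hdeg
      _ = S.card := hcardS.symm
  have : S = p.roots.toFinset := Finset.eq_of_subset_of_card_le hsub hle
  rw [← this] at hxmem
  rw [hS, Finset.mem_image] at hxmem
  obtain ⟨a, -, ha⟩ := hxmem
  exact ⟨a, ha⟩

/-- Roots of the minimal polynomial over a finite field are Frobenius conjugates. -/
lemma minpoly_root_conj {p r : ℕ} [Fact p.Prime] [CharP K p]
    (hcard : Fintype.card F = p ^ r)
    {α β : K} {m : ℕ} (hm : 0 < m) (hα : α ^ Fintype.card F ^ m = α)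
    (hβ : aeval β (minpoly F α) = 0) :
    ∃ j < m, β = α ^ Fintype.card F ^ j := by
  classical
  set q := Fintype.card F with hq
  haveI : ExpChar K p := ExpChar.prime Fact.out
  set ψ : K →+* K := iterateFrobenius K p r with hψdef
  have hψ : ∀ x : K, ψ x = x ^ q := fun x => by
    rw [hψdef, iterateFrobenius_def, hcard]
  set u : ℕ → K[X] := fun j => X - C (α ^ q ^ j) with hu
  set g : K[X] := ∏ j ∈ Finset.range m, u j with hg
  have humap : ∀ j, (u j).map ψ = u (j + 1) := by
    intro j
    rw [hu]
    simp only [Polynomial.map_sub, map_X, map_C]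
    rw [hψ, ← pow_mul, ← pow_succ]
  have hum : u m = u 0 := by
    rw [hu]
    simp only
    rw [pow_zero, pow_one, hα]
  have hmap : g.map ψ = g := by
    rw [hg, Polynomial.map_prod]
    simp_rw [humap]
    have h1 := Finset.prod_range_succ' u m
    have h2 := Finset.prod_range_succ u m
    rw [h1, hum] at h2
    exact mul_right_cancel₀ (X_sub_C_ne_zero (α ^ q ^ 0)) h2
  have hcoeff : ∀ i, g.coeff i ∈ Set.range (algebraMap F K) := by
    intro i
    have := congrArg (fun t => Polynomial.coeff t i) hmap
    simp only [coeff_map] at this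
    have hfix : g.coeff i ^ q = g.coeff i := by rw [← hψ]; exact this
    obtain ⟨a, ha⟩ := fixed_mem (K := K) hfix
    exact ⟨a, ha⟩
  obtain ⟨P, hP⟩ := (mem_lifts (f := algebraMap F K) g).mp ((lifts_iff_coeff_lifts g).mpr hcoeff)
  have hPα : aeval α P = 0 := by
    rw [aeval_def, ← eval_map, hP, hg, eval_prod]
    refine Finset.prod_eq_zero (Finset.mem_range.mpr hm) ?_
    rw [hu]
    simp
  have hdvd : minpoly F α ∣ P := minpoly.dvd F α hPα
  have hmapdvd : (minpoly F α).map (algebraMap F K) ∣ g := by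
    rw [← hP]
    exact Polynomial.map_dvd _ hdvd
  have hβg : g.eval β = 0 := by
    obtain ⟨c, hc⟩ := hmapdvd
    rw [hc, eval_mul, eval_map, ← aeval_def, hβ, zero_mul]
  rw [hg, eval_prod, Finset.prod_eq_zero_iff] at hβg
  obtain ⟨j, hj, hval⟩ := hβg
  rw [hu] at hval
  simp only [eval_sub, eval_X, eval_C, sub_eq_zero] at hval
  exact ⟨j, Finset.mem_range.mp hj, hval⟩

end Aux

/-- For odd `n̄` and `F = F_{2^r}` with `2^r` coprime to `n̄`: the factorization of
`x^n̄ - 1` over `F` contains a pair `{h, h*}` of distinct reciprocal monic irreducible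
factors iff `q^k ≢ -1 (mod n̄)` for all positive `k`. -/
theorem stmt_16 {F : Type*} [Field F] [Fintype F] (n r : ℕ) (hn : Odd n) (hr : 0 < r)
    (hcard : Fintype.card F = 2 ^ r)
    (hcop : Nat.Coprime (Fintype.card F) n) :
    (∃ h : Polynomial F, h.Monic ∧ Irreducible h ∧
        h ∣ Polynomial.X ^ n - 1 ∧ recip h ∣ Polynomial.X ^ n - 1 ∧ recip h ≠ h) ↔
      ∀ k : ℕ, 0 < k → ((Fintype.card F : ZMod n)) ^ k ≠ -1 := by
  classical
  haveI hp2 : Fact (Nat.Prime 2) := ⟨Nat.prime_two⟩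
  have hnpos : 0 < n := hn.pos
  have hn0 : n ≠ 0 := hnpos.ne'
  haveI : NeZero n := ⟨hn0⟩
  haveI hchar : CharP F 2 := by
    have h1 : CharP F (ringChar F) := ringChar.charP F
    have hprime : (ringChar F).Prime := CharP.char_is_prime F (ringChar F)
    have hdvd : ringChar F ∣ 2 ^ r := by
      rw [← hcard]
      exact (CharP.cast_eq_zero_iff F (ringChar F) (Fintype.card F)).mp
        (FiniteField.cast_card_eq_zero F)
    have h2 : ringChar F = 2 :=
      (Nat.prime_dvd_prime_iff_eq hprime Nat.prime_two).mp (hprime.dvd_of_dvd_pow hdvd)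
    rw [← h2]; exact h1
  set K := AlgebraicClosure F with hK
  haveI : CharP K 2 := charP_of_injective_algebraMap (algebraMap F K).injective 2
  haveI : ExpChar K 2 := ExpChar.prime Nat.prime_two
  let φ : K →ₐ[F] K :=
    { iterateFrobenius K 2 r with
      commutes' := fun a => by
        show iterateFrobenius K 2 r (algebraMap F K a) = algebraMap F K a
        rw [iterateFrobenius_def, ← map_pow, ← hcard, FiniteField.pow_card] }
  have hφ : ∀ x : K, φ x = x ^ Fintype.card F := fun x => by
    show iterateFrobenius K 2 r x = x ^ Fintype.card F
    rw [iterateFrobenius_def, hcard]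
  have hcoeff0 : ∀ {h : Polynomial F}, h ∣ X ^ n - 1 → h.coeff 0 ≠ 0 := by
    intro h hdvd h0
    have hXdvd : (X : Polynomial F) ∣ X ^ n - 1 := (X_dvd_iff.mpr h0).trans hdvd
    obtain ⟨c, hc⟩ := hXdvd
    have := congrArg (eval 0) hc
    simp [zero_pow hn0] at this
  have hfrob : ∀ (h : Polynomial F) (x : K), aeval x h = 0 → ∀ j : ℕ,
      aeval (x ^ Fintype.card F ^ j) h = 0 := by
    intro h x hx j
    induction j with
    | zero => simpa using hx
    | succ j ih =>
        have hstep : x ^ Fintype.card F ^ (j + 1) = φ (x ^ Fintype.card F ^ j) := by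
          rw [hφ, ← pow_mul, ← pow_succ]
        rw [hstep, aeval_algHom_apply, ih, map_zero]
  constructor
  · rintro ⟨h, hmon, hirr, hdvd, hrdvd, hne⟩ k hk hqk
    have h0 := hcoeff0 hdvd
    have hdegpos : 0 < h.natDegree := hirr.natDegree_pos
    have hdegne : (h.map (algebraMap F K)).degree ≠ 0 := by
      rw [degree_map, degree_eq_natDegree hmon.ne_zero]
      exact_mod_cast fun hd => hdegpos.ne' (by exact_mod_cast hd)
    obtain ⟨α, hα⟩ := IsAlgClosed.exists_root (h.map (algebraMap F K)) hdegne
    have hαh : aeval α h = 0 := by rwa [aeval_def, ← eval_map]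
    have hαn : α ^ n = 1 := by
      obtain ⟨c, hc⟩ := hdvd
      have h2 := congrArg (aeval α) hc
      rw [map_sub, map_pow, aeval_X, map_one, map_mul, hαh, zero_mul, sub_eq_zero] at h2
      exact h2
    have hα0 : α ≠ 0 := fun h' => by
      rw [h', zero_pow hn0] at hαn; exact zero_ne_one hαn
    have hndvd : n ∣ Fintype.card F ^ k + 1 := by
      have hz : ((Fintype.card F ^ k + 1 : ℕ) : ZMod n) = 0 := by
        push_cast
        rw [hqk]; ring
      exact (ZMod.natCast_eq_zero_iff _ _).mp hz
    obtain ⟨t, ht⟩ := hndvd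
    have hinv : α ^ Fintype.card F ^ k = α⁻¹ := by
      have h1 : α ^ (Fintype.card F ^ k + 1) = 1 := by
        rw [ht, pow_mul, hαn, one_pow]
      rw [pow_succ] at h1
      exact eq_inv_of_mul_eq_one_left h1
    have hroot : aeval α⁻¹ h = 0 := by
      rw [← hinv]; exact hfrob h α hαh k
    have hmin : h = minpoly F α⁻¹ := minpoly.eq_of_irreducible_of_monic hirr hroot hmon
    have hrecroot : aeval α⁻¹ (recip h) = 0 := (recip_aeval_zero h0 hα0).mpr hαh
    have hdvd2 : h ∣ recip h := by
      have hd := minpoly.dvd F α⁻¹ hrecroot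
      rwa [← hmin] at hd
    exact hne (eq_of_monic_of_dvd_of_natDegree_le hmon (recip_monic hmon h0) hdvd2
      (le_of_eq (recip_natDegree hmon.ne_zero h0)))
  · intro hall
    have hn1 : n ≠ 1 := by
      rintro rfl
      exact hall 1 one_pos (Subsingleton.elim _ _)
    haveI : NeZero ((n : K)) := ⟨by
      rw [Ne, CharP.cast_eq_zero_iff K 2 n]
      exact fun h2 => (Nat.not_even_iff_odd.mpr hn) (even_iff_two_dvd.mpr h2)⟩
    obtain ⟨ζ, hζ⟩ := HasEnoughRootsOfUnity.exists_primitiveRoot K n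
    have hζn : ζ ^ n = 1 := hζ.pow_eq_one
    have hζ0 : ζ ≠ 0 := fun h' => by
      rw [h', zero_pow hn0] at hζn; exact zero_ne_one hζn
    have hmonXn : (X ^ n - 1 : Polynomial F).Monic := by
      have := monic_X_pow_sub_C (1 : F) hn0
      rwa [map_one] at this
    have hint : IsIntegral F ζ := ⟨X ^ n - 1, hmonXn, by simp [hζn]⟩
    set h := minpoly F ζ with hh
    have hmon : h.Monic := minpoly.monic hint
    have hirr : Irreducible h := minpoly.irreducible hint
    have haeval : aeval ζ h = 0 := minpoly.aeval F ζ
    have hdvd : h ∣ X ^ n - 1 := minpoly.dvd F ζ (by simp [hζn])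
    have h0 := hcoeff0 hdvd
    refine ⟨h, hmon, hirr, hdvd, ?_, ?_⟩
    · obtain ⟨c, hc⟩ := hdvd
      have hrev : (X ^ n - 1 : Polynomial F).reverse = X ^ n - 1 := by
        have hdeg : (X ^ n - 1 : Polynomial F).natDegree = n := by
          have := natDegree_X_pow_sub_C (n := n) (r := (1 : F))
          rwa [map_one] at this
        unfold Polynomial.reverse
        rw [hdeg, reflect_sub, reflect_monomial, reflect_one, revAt_le (le_refl n),
          Nat.sub_self, pow_zero, ← neg_sub, CharTwo.neg_eq]
      have hfact : (X ^ n - 1 : Polynomial F) = h.reverse * c.reverse := by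
        rw [← hrev, hc, reverse_mul_of_domain]
      refine ⟨C (h.coeff 0) * c.reverse, ?_⟩
      rw [hfact]
      show h.reverse * c.reverse = C (h.coeff 0)⁻¹ * h.reverse * (C (h.coeff 0) * c.reverse)
      rw [show C (h.coeff 0)⁻¹ * h.reverse * (C (h.coeff 0) * c.reverse)
          = C (h.coeff 0)⁻¹ * C (h.coeff 0) * (h.reverse * c.reverse) by ring,
        ← C_mul, inv_mul_cancel₀ h0, C_1, one_mul]
    · intro heq
      have hroot : aeval ζ⁻¹ h = 0 := by
        rw [← heq]; exact (recip_aeval_zero h0 hζ0).mpr haeval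
      set u : (ZMod n)ˣ := ZMod.unitOfCoprime _ hcop with hu
      set m := orderOf u with hm
      have hmpos : 0 < m := orderOf_pos u
      have hqm : ((Fintype.card F : ZMod n)) ^ m = 1 := by
        have hval : ((u : (ZMod n)ˣ) : ZMod n) = (Fintype.card F : ZMod n) :=
          ZMod.coe_unitOfCoprime _ hcop
        rw [← hval, ← Units.val_pow_eq_pow_val, pow_orderOf_eq_one, Units.val_one]
      have hq1 : 1 ≤ Fintype.card F ^ m := Nat.one_le_pow _ _ Fintype.card_pos
      have hdvdm : n ∣ Fintype.card F ^ m - 1 := by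
        have h1 : ((Fintype.card F ^ m : ℕ) : ZMod n) = ((1 : ℕ) : ZMod n) := by
          push_cast; rw [hqm]
        exact (Nat.modEq_iff_dvd' hq1).mp ((ZMod.natCast_eq_natCast_iff _ _ _).mp h1).symm
      have hζqm : ζ ^ Fintype.card F ^ m = ζ := by
        obtain ⟨t, ht⟩ := hdvdm
        have h2 : Fintype.card F ^ m = n * t + 1 := by omega
        rw [h2, pow_add, pow_mul, hζn, one_pow, pow_one, one_mul]
      obtain ⟨j, hj, hjeq⟩ := minpoly_root_conj (K := K) hcard hmpos hζqm hroot
      have hpow1 : ζ ^ (Fintype.card F ^ j + 1) = 1 := by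
        rw [pow_add, pow_one, mul_comm, ← hjeq, mul_comm, inv_mul_cancel₀ hζ0]
      have hndvd : n ∣ Fintype.card F ^ j + 1 := hζ.dvd_of_pow_eq_one _ hpow1
      have hzm : ((Fintype.card F : ZMod n)) ^ j = -1 := by
        have hz : ((Fintype.card F ^ j + 1 : ℕ) : ZMod n) = 0 :=
          (ZMod.natCast_eq_zero_iff _ _).mpr hndvd
        push_cast at hz
        exact eq_neg_of_add_eq_zero_left hz
      rcases Nat.eq_zero_or_pos j with rfl | hjpos
      · rw [pow_zero] at hzm
        have h2z : ((2 : ℕ) : ZMod n) = 0 := by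
          push_cast
          linear_combination hzm
        have hn2 : n ∣ 2 := (ZMod.natCast_eq_zero_iff _ _).mp h2z
        rcases (Nat.dvd_prime Nat.prime_two).mp hn2 with h1 | h1
        · exact hn1 h1
        · rw [h1] at hn; exact (Nat.not_even_iff_odd.mpr hn) even_two
      · exact hall j hjpos hzm
end
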